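/- For every integer n ≥ 1, the number of Catalan words of length n avoiding the vincular pattern 1-11 equals Σ_{i=1}^{n} Σ_{j=1}^{i} binom(j, n−i) · q_i(j), where binom(j, n−i) is the binomial coefficient (equal to 0 when n−i > j) and q_i(j) is the number of Catalan words of length i with no two equal adjacent letters whose largest letter is j. -/

import Mathlib

/-- A Catalan word: a word of positive integers starting with 1 in which each
letter exceeds its predecessor by at most 1. -/
def IsCatalanWord {n : ℕ} (w : Fin n → ℕ) : Prop :=
  (∀ i, 1 ≤ w i) ∧ (∀ h : 0 < n, w ⟨0, h⟩ = 1) ∧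
  ∀ i : ℕ, ∀ h : i + 1 < n, w ⟨i + 1, h⟩ ≤ w ⟨i, by omega⟩ + 1

/-- `w` contains the vincular pattern 1-11: there are indices `i < j` with
`w i = w j = w (j+1)`. -/
def Contains1_11 {n : ℕ} (w : Fin n → ℕ) : Prop :=
  ∃ i j : ℕ, ∃ hj : j + 1 < n, ∃ hij : i < j,
    w ⟨i, by omega⟩ = w ⟨j, by omega⟩ ∧ w ⟨j, by omega⟩ = w ⟨j + 1, hj⟩

/-- `q i j`: the number of Catalan words of length `i` with no two equal
adjacent letters whose largest letter is `j`. -/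
noncomputable def q (i j : ℕ) : ℕ :=
  Set.ncard {w : Fin i → ℕ | IsCatalanWord w ∧
    (∀ k : ℕ, ∀ h : k + 1 < i, w ⟨k + 1, h⟩ ≠ w ⟨k, by omega⟩) ∧
    (∀ k, w k ≤ j) ∧ (∃ k, w k = j)}

/-!
A Catalan word avoids 1-11 exactly when every plateau `v v` is the first occurrence of `v`.
Collapsing plateaus thus sends it to a plateau-free Catalan word `u` together with the set `T`
of letters whose first occurrence was doubled, and conversely every `T ⊆ letters u` arises, with
`|w| = |u| + |T|`. A Catalan word with largest letter `j` uses exactly the letters `1, …, j`, so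
for `u` of length `i` and maximum `j` there are `binom(j, n - i)` choices of `T`.
-/

namespace List

variable {α : Type*}

theorem ncard_setOf_ofFn (n : ℕ) (P : List α → Prop) :
    {w : Fin n → α | P (ofFn w)}.ncard = {l : List α | l.length = n ∧ P l}.ncard := by
  rw [← Set.ncard_image_of_injective _ ofFn_injective]
  congr 1
  ext l
  constructor
  · rintro ⟨w, hw, rfl⟩
    exact ⟨length_ofFn, hw⟩
  · rintro ⟨rfl, hl⟩
    exact ⟨l.get, by rwa [Set.mem_ofPred_eq, ofFn_get], ofFn_get l⟩

theorem finite_setOf_length_le_forall_mem {s : Set α} (hs : s.Finite) (n : ℕ) :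
    {l : List α | l.length ≤ n ∧ ∀ x ∈ l, x ∈ s}.Finite := by
  have := hs.to_subtype
  refine ((finite_length_le s n).image (map Subtype.val)).subset ?_
  rintro l ⟨hl, hls⟩
  obtain ⟨l', rfl⟩ : ∃ l' : List s, l'.map Subtype.val = l := CanLift.prf l hls
  exact ⟨l', by simpa using hl, rfl⟩

theorem IsChain.mem_of_le_of_le {c m v : ℕ} {l : List ℕ}
    (h : (c :: l).IsChain (fun a b => b ≤ a + 1)) (hm : m ∈ c :: l) (hcv : c ≤ v)
    (hvm : v ≤ m) :
    v ∈ c :: l := by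
  induction l generalizing c with
  | nil => simp_all; omega
  | cons a l ih =>
    rw [isChain_cons_cons] at h
    rcases eq_or_lt_of_le hcv with rfl | hcv
    · exact mem_cons_self
    have hm' : m ∈ a :: l := (mem_cons.1 hm).resolve_left (by omega)
    exact mem_cons_of_mem c (ih h.2 hm' (by omega))

theorem exists_destutter_cons_eq (R : α → α → Prop) [DecidableRel R] (a : α) (l : List α) :
    ∃ s, (a :: l).destutter R = a :: s := by
  induction l with
  | nil => exact ⟨[], rfl⟩
  | cons b l ih =>
    rw [destutter_cons_cons]
    split_ifs
    · exact ⟨_, rfl⟩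
    · exact ih

theorem head?_destutter (R : α → α → Prop) [DecidableRel R] (l : List α) :
    (l.destutter R).head? = l.head? := by
  cases l with
  | nil => rfl
  | cons a l => obtain ⟨s, hs⟩ := exists_destutter_cons_eq R a l; simp [hs]

def Avoids1_11 (l : List α) : Prop :=
  ∀ p v r, l = p ++ v :: v :: r → v ∉ p

theorem Avoids1_11.of_cons {a : α} {l : List α} (h : Avoids1_11 (a :: l)) : Avoids1_11 l :=
  fun p v r hl hv => h (a :: p) v r (by simp [hl]) (mem_cons_of_mem a hv)

theorem Avoids1_11.of_cons_cons_self {a : α} {l : List α} (h : Avoids1_11 (a :: a :: l)) :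
    Avoids1_11 (a :: l) := by
  intro p v r hl
  rcases p with _ | ⟨x, p⟩
  · simp
  · obtain ⟨rfl, hl⟩ := cons_eq_cons.1 hl
    simpa using h (a :: a :: p) v r (by simp [hl])

theorem avoids1_11_iff_getElem {l : List α} :
    Avoids1_11 l ↔ ∀ i j (hj : j + 1 < l.length) (hij : i < j),
      l[i]'(by omega) = l[j] → l[j] ≠ l[j + 1] := by
  constructor
  · intro h i j hj hij e1 e2
    refine h (l.take j) l[j] (l.drop (j + 2)) ?_ ?_
    · conv_lhs => rw [← take_append_drop j l]
      rw [drop_eq_getElem_cons, drop_eq_getElem_cons hj, ← e2]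
    · rw [← e1]
      exact mem_iff_getElem.2 ⟨i, by simp; omega, getElem_take⟩
  · rintro h p v r rfl hv
    obtain ⟨i, hi, rfl⟩ := mem_iff_getElem.1 hv
    refine h i p.length (by simp) hi ?_ ?_ <;>
      simp [getElem_append_left hi, getElem_append_right]

section DecidableEq

variable [DecidableEq α]

theorem destutter_cons_cons_self (a : α) (l : List α) :
    (a :: a :: l).destutter (· ≠ ·) = (a :: l).destutter (· ≠ ·) := by
  simp [destutter_cons']

theorem destutter_cons_cons_of_ne {a b : α} (h : a ≠ b) (l : List α) :
    (a :: b :: l).destutter (· ≠ ·) = a :: (b :: l).destutter (· ≠ ·) := by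
  simp [destutter_cons', h]

theorem mem_destutter_ne {x : α} {l : List α} : x ∈ l.destutter (· ≠ ·) ↔ x ∈ l := by
  induction l using twoStepInduction with
  | nil => rfl
  | singleton => rfl
  | cons_cons a b l _ ih =>
    rcases eq_or_ne a b with rfl | hab
    · rw [destutter_cons_cons_self, ih]; simp
    · simp [destutter_cons_cons_of_ne hab, ih]

theorem IsChain.destutter_ne {R : α → α → Prop} {l : List α} (h : l.IsChain R) :
    (l.destutter (· ≠ ·)).IsChain R := by
  induction l using twoStepInduction with
  | nil => simp
  | singleton => simp
  | cons_cons a b l _ ih =>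
    rw [isChain_cons_cons] at h
    rcases eq_or_ne a b with rfl | hab
    · rw [destutter_cons_cons_self]; exact ih a h.2
    · rw [destutter_cons_cons_of_ne hab]
      obtain ⟨s, hs⟩ := exists_destutter_cons_eq (· ≠ ·) b l
      have := ih b h.2
      rw [hs] at this ⊢
      exact isChain_cons_cons.2 ⟨h.1, this⟩

def doubleFirst : List α → Finset α → List α
  | [], _ => []
  | a :: l, T =>
    if a ∈ T then a :: a :: doubleFirst l (T.erase a) else a :: doubleFirst l (T.erase a)

@[simp]
theorem doubleFirst_nil (T : Finset α) : doubleFirst [] T = [] := rfl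

theorem doubleFirst_cons_of_mem {a : α} {T : Finset α} (h : a ∈ T) (l : List α) :
    doubleFirst (a :: l) T = a :: a :: doubleFirst l (T.erase a) := if_pos h

theorem doubleFirst_cons_of_notMem {a : α} {T : Finset α} (h : a ∉ T) (l : List α) :
    doubleFirst (a :: l) T = a :: doubleFirst l T := by
  rw [doubleFirst, if_neg h, Finset.erase_eq_of_notMem h]

theorem exists_doubleFirst_cons_eq (a : α) (l : List α) (T : Finset α) :
    ∃ s, doubleFirst (a :: l) T = a :: s := by
  rw [doubleFirst]; split_ifs <;> exact ⟨_, rfl⟩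

theorem head?_doubleFirst (l : List α) (T : Finset α) : (doubleFirst l T).head? = l.head? := by
  cases l with
  | nil => rfl
  | cons a l => obtain ⟨s, hs⟩ := exists_doubleFirst_cons_eq a l T; simp [hs]

theorem mem_doubleFirst {x : α} {l : List α} {T : Finset α} :
    x ∈ doubleFirst l T ↔ x ∈ l := by
  induction l generalizing T with
  | nil => rfl
  | cons a l ih => rw [doubleFirst]; split_ifs <;> simp [ih]

theorem length_doubleFirst {l : List α} {T : Finset α} (hT : T ⊆ l.toFinset) :
    (doubleFirst l T).length = l.length + T.card := by
  induction l generalizing T with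
  | nil => simp_all
  | cons a l ih =>
    by_cases ha : a ∈ T
    · have hT' : T.erase a ⊆ l.toFinset := fun x hx => by
        have := hT (Finset.mem_of_mem_erase hx)
        simp_all
      have := Finset.card_erase_add_one ha
      rw [doubleFirst_cons_of_mem ha, length_cons, length_cons, ih hT', length_cons]
      omega
    · have hT' : T ⊆ l.toFinset := fun x hx => by
        have := hT hx
        simp only [toFinset_cons, Finset.mem_insert] at this
        exact this.resolve_left (by rintro rfl; exact ha hx)
      rw [doubleFirst_cons_of_notMem ha, length_cons, length_cons, ih hT']
      omega

theorem isChain_cons_doubleFirst {R : α → α → Prop} (hR : ∀ a, R a a) {c : α} {l : List α}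
    (h : (c :: l).IsChain R) (T : Finset α) : (c :: doubleFirst l T).IsChain R := by
  induction l generalizing c T with
  | nil => simp
  | cons a l ih =>
    rw [isChain_cons_cons] at h
    have := ih h.2 (T.erase a)
    rw [doubleFirst]
    split_ifs
    · exact isChain_cons_cons.2 ⟨h.1, isChain_cons_cons.2 ⟨hR a, this⟩⟩
    · exact isChain_cons_cons.2 ⟨h.1, this⟩

theorem doubleFirst_eq_append_cons_cons {l : List α} (hl : l.IsChain (· ≠ ·)) {T : Finset α}
    {p r : List α} {v : α} (h : doubleFirst l T = p ++ v :: v :: r) : v ∉ p ∧ v ∈ T := by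
  induction l generalizing T p with
  | nil => simp at h
  | cons a l ih =>
    rw [isChain_cons] at hl
    have hhead : (doubleFirst l (T.erase a)).head? ≠ some a := by
      rw [head?_doubleFirst]; intro h'; exact hl.1 a h' rfl
    have step : ∀ {q : List α}, doubleFirst l (T.erase a) = q ++ v :: v :: r →
        v ∉ a :: q ∧ v ∈ T := fun hq => by
      obtain ⟨hvq, hvT⟩ := ih hl.2 hq
      exact ⟨by simp [hvq, Finset.ne_of_mem_erase hvT], Finset.mem_of_mem_erase hvT⟩
    rw [doubleFirst] at h
    split_ifs at h with ha
    · rcases cons_eq_append_iff.1 h with ⟨rfl, h₁⟩ | ⟨q, rfl, h₁⟩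
      · simp only [cons.injEq] at h₁
        exact ⟨by simp, h₁.1 ▸ ha⟩
      rcases cons_eq_append_iff.1 h₁ with ⟨rfl, h₂⟩ | ⟨q, rfl, h₂⟩
      · simp only [cons.injEq] at h₂
        exact absurd (by rw [← h₂.2]; simp [← h₂.1]) hhead
      · exact ⟨by simpa using (step h₂).1, (step h₂).2⟩
    · rcases cons_eq_append_iff.1 h with ⟨rfl, h₁⟩ | ⟨q, rfl, h₁⟩
      · simp only [cons.injEq] at h₁
        exact absurd (by rw [← h₁.2]; simp [← h₁.1]) hhead
      · exact step h₁

theorem exists_doubleFirst_eq_append_cons_cons {l : List α} {T : Finset α} {v : α}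
    (hvT : v ∈ T) (hvl : v ∈ l) : ∃ p r, doubleFirst l T = p ++ v :: v :: r := by
  induction l generalizing T with
  | nil => simp at hvl
  | cons a l ih =>
    rcases eq_or_ne a v with rfl | hav
    · exact ⟨[], _, doubleFirst_cons_of_mem hvT l⟩
    obtain ⟨p, r, hpr⟩ := ih (Finset.mem_erase.2 ⟨hav.symm, hvT⟩)
      ((mem_cons.1 hvl).resolve_left hav.symm)
    rw [doubleFirst]
    split_ifs
    · exact ⟨a :: a :: p, r, by simp [hpr]⟩
    · exact ⟨a :: p, r, by simp [hpr]⟩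

theorem destutter_doubleFirst {l : List α} (hl : l.IsChain (· ≠ ·)) (T : Finset α) :
    (doubleFirst l T).destutter (· ≠ ·) = l := by
  induction l generalizing T with
  | nil => rfl
  | cons a l ih =>
    rw [isChain_cons] at hl
    have key : (a :: doubleFirst l (T.erase a)).destutter (· ≠ ·) = a :: l := by
      cases l with
      | nil => rfl
      | cons b l =>
        obtain ⟨s, hs⟩ := exists_doubleFirst_cons_eq b l (T.erase a)
        rw [hs, destutter_cons_cons_of_ne (hl.1 b rfl), ← hs, ih hl.2]
    rw [doubleFirst]
    split_ifs
    · rw [destutter_cons_cons_self, key]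
    · exact key

theorem avoids1_11_doubleFirst {l : List α} (hl : l.IsChain (· ≠ ·)) (T : Finset α) :
    Avoids1_11 (doubleFirst l T) :=
  fun _ _ _ h => (doubleFirst_eq_append_cons_cons hl h).1

theorem injOn_doubleFirst :
    Set.InjOn (fun p : List α × Finset α => doubleFirst p.1 p.2)
      {p | p.1.IsChain (· ≠ ·) ∧ p.2 ⊆ p.1.toFinset} := by
  rintro ⟨u, T⟩ ⟨hu, hT⟩ ⟨u', T'⟩ ⟨hu', hT'⟩
    (h : doubleFirst u T = doubleFirst u' T')
  dsimp only at hu hT hu' hT'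
  obtain rfl : u = u' := by rw [← destutter_doubleFirst hu T, h, destutter_doubleFirst hu']
  have mem_of_mem : ∀ {S S' : Finset α}, S ⊆ u.toFinset →
      doubleFirst u S = doubleFirst u S' → ∀ v ∈ S, v ∈ S' := fun hS h v hv => by
    obtain ⟨p, r, hpr⟩ := exists_doubleFirst_eq_append_cons_cons hv (mem_toFinset.1 (hS hv))
    exact (doubleFirst_eq_append_cons_cons hu (h ▸ hpr)).2
  exact Prod.ext rfl (Finset.Subset.antisymm (mem_of_mem hT h) (mem_of_mem hT' h.symm))

theorem Avoids1_11.notMem_of_doubleFirst_eq {a : α} {l u : List α} {T : Finset α}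
    (h : Avoids1_11 (a :: l)) (hu : doubleFirst u T = l) (hT : T ⊆ u.toFinset) : a ∉ T := by
  intro ha
  obtain ⟨p, r, hpr⟩ := exists_doubleFirst_eq_append_cons_cons ha (mem_toFinset.1 (hT ha))
  exact h (a :: p) a r (by rw [← hu, hpr, cons_append]) mem_cons_self

theorem Avoids1_11.exists_doubleFirst_destutter_eq {l : List α} (h : Avoids1_11 l) :
    ∃ T ⊆ (l.destutter (· ≠ ·)).toFinset, doubleFirst (l.destutter (· ≠ ·)) T = l := by
  induction l using twoStepInduction with
  | nil => exact ⟨∅, by simp, rfl⟩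
  | singleton a => exact ⟨∅, by simp, doubleFirst_cons_of_notMem (Finset.notMem_empty a) []⟩
  | cons_cons a b l _ ih =>
    rcases eq_or_ne a b with rfl | hab
    · obtain ⟨T, hT, hl⟩ := ih a h.of_cons_cons_self
      have ha := h.notMem_of_doubleFirst_eq hl hT
      obtain ⟨s, hs⟩ := exists_destutter_cons_eq (· ≠ ·) a l
      rw [hs, doubleFirst_cons_of_notMem ha, cons.injEq] at hl
      refine ⟨insert a T, ?_, ?_⟩
      · rw [destutter_cons_cons_self, hs]
        rw [hs] at hT
        exact Finset.insert_subset (by simp) hT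
      · rw [destutter_cons_cons_self, hs, doubleFirst_cons_of_mem (Finset.mem_insert_self a T),
          Finset.erase_insert ha, hl.2]
    · obtain ⟨T, hT, hl⟩ := ih b h.of_cons
      have ha := h.notMem_of_doubleFirst_eq hl hT
      refine ⟨T, ?_, ?_⟩
      · rw [destutter_cons_cons_of_ne hab, toFinset_cons]
        exact hT.trans (Finset.subset_insert a _)
      · rw [destutter_cons_cons_of_ne hab, doubleFirst_cons_of_notMem ha, hl]

end DecidableEq

end List

theorem Set.ncard_eq_sum_ncard_fiberwise {α β : Type*} [DecidableEq β] {s : Set α}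
    (hs : s.Finite) {f : α → β} {t : Finset β} (H : ∀ a ∈ s, f a ∈ t) :
    s.ncard = ∑ b ∈ t, {a ∈ s | f a = b}.ncard := by
  rw [Set.ncard_eq_toFinset_card s hs,
    Finset.card_eq_sum_card_fiberwise fun a ha => H a (hs.mem_toFinset.1 ha)]
  refine Finset.sum_congr rfl fun b _ => ?_
  rw [← Set.ncard_coe_finset]
  congr 1
  ext
  simp

/-- Catalan words as lists; the chain starts at a phantom `0` so that it forces `w₁ ≤ 1`. -/
def IsCatalanList (l : List ℕ) : Prop :=
  (∀ x ∈ l, 1 ≤ x) ∧ (0 :: l).IsChain (fun a b => b ≤ a + 1)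

namespace IsCatalanList

variable {u : List ℕ}

theorem toFinset_eq_Icc_card (h : IsCatalanList u) :
    u.toFinset = Finset.Icc 1 u.toFinset.card := by
  rcases eq_or_ne u [] with rfl | hne
  · rfl
  obtain ⟨m, hmu, hmax⟩ := u.toFinset.exists_max_image id (by simpa using hne)
  have hIcc : u.toFinset = Finset.Icc 1 m := by
    ext x
    simp only [List.mem_toFinset, Finset.mem_Icc]
    refine ⟨fun hx => ⟨h.1 x hx, hmax x (List.mem_toFinset.2 hx)⟩, fun ⟨h1, hxm⟩ => ?_⟩
    have hx0 := h.2.mem_of_le_of_le (List.mem_cons_of_mem 0 (List.mem_toFinset.1 hmu))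
      (Nat.zero_le x) hxm
    exact (List.mem_cons.1 hx0).resolve_left (by omega)
  rw [hIcc, Nat.card_Icc, Nat.add_sub_cancel]

theorem toFinset_subset_Icc_length (h : IsCatalanList u) :
    u.toFinset ⊆ Finset.Icc 1 u.length := by
  rw [h.toFinset_eq_Icc_card]
  exact Finset.Icc_subset_Icc_right (List.toFinset_card_le u)

theorem forall_le_and_mem_iff (h : IsCatalanList u) {j : ℕ} (hj : 1 ≤ j) :
    ((∀ x ∈ u, x ≤ j) ∧ j ∈ u) ↔ u.toFinset = Finset.Icc 1 j := by
  constructor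
  · rintro ⟨hle, hj⟩
    obtain ⟨c, hc⟩ : ∃ c, u.toFinset = Finset.Icc 1 c := ⟨_, h.toFinset_eq_Icc_card⟩
    have hjc : j ≤ c := (Finset.mem_Icc.1 (hc ▸ List.mem_toFinset.2 hj)).2
    have hcu : c ∈ u := List.mem_toFinset.1 (hc ▸ Finset.mem_Icc.2 ⟨by omega, le_rfl⟩)
    rw [hc, le_antisymm (hle c hcu) hjc]
  · intro hu
    simp only [← List.mem_toFinset, hu, Finset.mem_Icc]
    exact ⟨fun x hx => hx.2, hj, le_rfl⟩

theorem doubleFirst (h : IsCatalanList u) (T : Finset ℕ) : IsCatalanList (u.doubleFirst T) :=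
  ⟨fun x hx => h.1 x (List.mem_doubleFirst.1 hx), List.isChain_cons_doubleFirst (by simp) h.2 T⟩

theorem destutter (h : IsCatalanList u) : IsCatalanList (u.destutter (· ≠ ·)) := by
  refine ⟨fun x hx => h.1 x (List.mem_destutter_ne.1 hx), ?_⟩
  have hchain := List.isChain_cons.1 h.2
  rw [List.isChain_cons, List.head?_destutter]
  exact ⟨hchain.1, hchain.2.destutter_ne⟩

end IsCatalanList

theorem isCatalanWord_iff {n : ℕ} (w : Fin n → ℕ) :
    IsCatalanWord w ↔ IsCatalanList (List.ofFn w) := by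
  rw [IsCatalanWord, IsCatalanList, List.isChain_cons, List.isChain_ofFn, List.forall_mem_ofFn_iff]
  cases n with
  | zero => simp
  | succ n =>
    simp only [List.ofFn_succ, List.head?_cons, Option.mem_def, Option.some.injEq, forall_eq']
    exact ⟨fun ⟨h1, h2, h3⟩ => ⟨h1, (h2 n.succ_pos).le, h3⟩,
      fun ⟨h1, h2, h3⟩ => ⟨h1, fun _ => le_antisymm h2 (h1 0), h3⟩⟩

theorem not_contains1_11_iff {n : ℕ} (w : Fin n → ℕ) :
    ¬ Contains1_11 w ↔ (List.ofFn w).Avoids1_11 := by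
  simp [Contains1_11, List.avoids1_11_iff_getElem]

def plateauFreeCatalan (i j : ℕ) : Set (List ℕ) :=
  {u | u.length = i ∧ IsCatalanList u ∧ u.IsChain (· ≠ ·) ∧ u.toFinset = Finset.Icc 1 j}

def markedPlateauFreeCatalan (n : ℕ) : Set (List ℕ × Finset ℕ) :=
  {p | IsCatalanList p.1 ∧ p.1.IsChain (· ≠ ·) ∧ p.2 ⊆ p.1.toFinset ∧
    p.1.length + p.2.card = n}

theorem q_eq_ncard {i j : ℕ} (hj : 1 ≤ j) : q i j = (plateauFreeCatalan i j).ncard := by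
  rw [q, plateauFreeCatalan, ← List.ncard_setOf_ofFn]
  congr 1
  ext w
  simp only [Set.mem_ofPred_eq, isCatalanWord_iff]
  refine and_congr_right fun hcat => ?_
  rw [← hcat.forall_le_and_mem_iff hj, List.isChain_ofFn, List.forall_mem_ofFn_iff, List.mem_ofFn]
  simp only [ne_comm]

theorem bijOn_doubleFirst (n : ℕ) :
    Set.BijOn (fun p : List ℕ × Finset ℕ => p.1.doubleFirst p.2) (markedPlateauFreeCatalan n)
      {l | l.length = n ∧ IsCatalanList l ∧ l.Avoids1_11} := by
  refine ⟨?_, List.injOn_doubleFirst.mono fun _ hp => by exact ⟨hp.2.1, hp.2.2.1⟩, ?_⟩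
  · rintro ⟨u, T⟩ ⟨hcat, hu, hT, hn⟩
    exact ⟨(List.length_doubleFirst hT).trans hn, hcat.doubleFirst T,
      List.avoids1_11_doubleFirst hu T⟩
  · rintro l ⟨rfl, hcat, hl⟩
    obtain ⟨T, hT, hlT⟩ := hl.exists_doubleFirst_destutter_eq
    have hlen : (l.destutter (· ≠ ·)).length + T.card = l.length := by
      rw [← List.length_doubleFirst hT, hlT]
    exact ⟨(l.destutter (· ≠ ·), T),
      ⟨hcat.destutter, List.isChain_destutter _ l, hT, hlen⟩, hlT⟩

theorem finite_markedPlateauFreeCatalan (n : ℕ) : (markedPlateauFreeCatalan n).Finite := by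
  refine ((List.finite_setOf_length_le_forall_mem (Finset.Icc 1 n).finite_toSet n).prod
    (Finset.Icc 1 n).powerset.finite_toSet).subset ?_
  rintro ⟨u, T⟩ ⟨hcat, -, hT, hn⟩
  dsimp only at hcat hT hn
  have hsub : u.toFinset ⊆ Finset.Icc 1 n :=
    hcat.toFinset_subset_Icc_length.trans (Finset.Icc_subset_Icc_right (by omega))
  exact ⟨⟨(by omega : u.length ≤ n), fun x hx => hsub (List.mem_toFinset.2 hx)⟩,
    Finset.mem_powerset.2 (hT.trans hsub)⟩

theorem markedPlateauFreeCatalan_fiber {n i : ℕ} (hi : i ≤ n) (j : ℕ) :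
    {p ∈ markedPlateauFreeCatalan n |
        (⟨p.1.length, p.1.toFinset.card⟩ : Σ _ : ℕ, ℕ) = ⟨i, j⟩} =
      plateauFreeCatalan i j ×ˢ
        (Finset.powersetCard (n - i) (Finset.Icc 1 j) : Set (Finset ℕ)) := by
  ext ⟨u, T⟩
  simp only [markedPlateauFreeCatalan, plateauFreeCatalan, Set.mem_ofPred_eq, Set.mem_prod,
    Finset.mem_coe, Finset.mem_powersetCard, Sigma.mk.inj_iff, heq_eq_eq]
  constructor
  · rintro ⟨⟨hcat, hu, hT, hn⟩, rfl, rfl⟩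
    have hIcc := hcat.toFinset_eq_Icc_card
    exact ⟨⟨rfl, hcat, hu, hIcc⟩, hIcc ▸ hT, by omega⟩
  · rintro ⟨⟨rfl, hcat, hu, hIcc⟩, hT, hcard⟩
    refine ⟨⟨hcat, hu, hIcc ▸ hT, by omega⟩, rfl, by simp [hIcc]⟩

theorem ncard_markedPlateauFreeCatalan {n : ℕ} (hn : 1 ≤ n) :
    (markedPlateauFreeCatalan n).ncard = ∑ i ∈ Finset.Icc 1 n, ∑ j ∈ Finset.Icc 1 i,
      Nat.choose j (n - i) * (plateauFreeCatalan i j).ncard := by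
  have hmaps : ∀ p ∈ markedPlateauFreeCatalan n,
      (⟨p.1.length, p.1.toFinset.card⟩ : Σ _ : ℕ, ℕ) ∈
        (Finset.Icc 1 n).sigma fun i => Finset.Icc 1 i := by
    rintro ⟨u, T⟩ ⟨-, -, hT, hlen⟩
    dsimp only at hT hlen ⊢
    have hne : u ≠ [] := by
      rintro rfl
      simp only [List.toFinset_nil, Finset.subset_empty] at hT
      simp [hT] at hlen
      omega
    have := List.toFinset_card_le u
    have := Finset.card_pos.2 (List.toFinset_nonempty_iff u |>.2 hne)
    have := List.length_pos_iff.2 hne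
    simp only [Finset.mem_sigma, Finset.mem_Icc]
    omega
  rw [Set.ncard_eq_sum_ncard_fiberwise (finite_markedPlateauFreeCatalan n) hmaps,
    Finset.sum_sigma]
  refine Finset.sum_congr rfl fun i hi => Finset.sum_congr rfl fun j _ => ?_
  rw [markedPlateauFreeCatalan_fiber (Finset.mem_Icc.1 hi).2, Set.ncard_prod,
    Set.ncard_coe_finset, Finset.card_powersetCard, Nat.card_Icc, Nat.add_sub_cancel, mul_comm]

theorem catalan_avoid_1_11 (n : ℕ) (hn : 1 ≤ n) :
    Set.ncard {w : Fin n → ℕ | IsCatalanWord w ∧ ¬ Contains1_11 w} =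
      ∑ i ∈ Finset.Icc 1 n, ∑ j ∈ Finset.Icc 1 i, Nat.choose j (n - i) * q i j := by
  simp only [isCatalanWord_iff, not_contains1_11_iff]
  rw [List.ncard_setOf_ofFn n (fun l => IsCatalanList l ∧ l.Avoids1_11),
    ← (bijOn_doubleFirst n).ncard_eq, ncard_markedPlateauFreeCatalan hn]
  refine Finset.sum_congr rfl fun i _ => Finset.sum_congr rfl fun j hj => ?_
  rw [q_eq_ncard (Finset.mem_Icc.1 hj).1]
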